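/- Let m be a positive integer, N = 3, and let S_3 act on ℂ^3 by permuting coordinates; let W = {x ∈ ℂ^3 : x_1+x_2+x_3 = 0} with this action, and set v_T = ε_3 − ε_1, v_S = ε_2 − ε_1 in W, where ε_1, ε_2, ε_3 is the standard basis of ℂ^3. Let d'_{m,k} = binom(m,k)·(m−1)!·(m+k−1)!/(2m+k)!. Then the rational map φ_1(z_1,z_2,z_3) = (z_2−z_3)^{−2m} Σ_{k=0}^m (−1)^{m+k} d'_{m,k}((−m−k)v_T + k v_S)(z_1−z_2)^{−m−k}(z_1−z_3)^k is a solution of the KZ equation with values in W and parameter −m on all of C_3. -/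

import Mathlib

/-!
Write `u = z₁ - z₂`, `v = z₁ - z₃`, `w = z₂ - z₃`, `T_k = w^{-2m} u^{-m-k} v^k` and let `c_k` be the
signed coefficients of `φ₁`. Since `(-m-k) v_T + k v_S = (m, k, -m-k)`, we have
`φ₁ = M₀ (m, 0, -m) + M₁ (0, 1, -1)` with the moments `M_j = Σ_k c_k k^j T_k`. Each `T_k` is a
monomial in the differences, so the derivatives of `M_j` are combinations of `M_j` and `M_{j+1}`
with coefficients rational in `z`. The hypergeometric recurrence
`(k+1)(2m+k+1) c_{k+1} = (k+m)(k-m) c_k` telescopes, since `u T_{k+1} = v T_k`, into the relation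
`v (m² M₀ - M₂) + u (M₂ + 2m M₁) = 0`. Eliminating `M₂` with it, every coordinate of every KZ
equation becomes an identity between rational functions of `z`, `M₀` and `M₁`.
-/

open scoped BigOperators

noncomputable section

/-- The configuration space `C_N = {z ∈ ℂ^N : z_i ≠ z_j for i ≠ j}`. -/
def Cconf (N : ℕ) : Set (Fin N → ℂ) := {z | ∀ i j : Fin N, i ≠ j → z i ≠ z j}

/-- `ψ` is a solution of the KZ equation on `U` with values in a space with
`S_N`-action `act` and parameter `m`:  `ψ` is differentiable on `U` and
`∂ψ/∂z_i(z) = m Σ_{j≠i} (s_{ij}+1)ψ(z)/(z_i−z_j)` for all `i` and `z ∈ U`. -/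
def IsKZSol {N : ℕ} {W : Type*} [NormedAddCommGroup W] [NormedSpace ℂ W]
    (act : Equiv.Perm (Fin N) → W → W) (m : ℂ) (U : Set (Fin N → ℂ))
    (ψ : (Fin N → ℂ) → W) : Prop :=
  DifferentiableOn ℂ ψ U ∧
  ∀ z ∈ U, ∀ i : Fin N,
    fderiv ℂ ψ z (Pi.single i 1) =
      m • ∑ j ∈ Finset.univ.filter (fun j => j ≠ i),
        (z i - z j)⁻¹ • (act (Equiv.swap i j) (ψ z) + ψ z)

/-- The coefficient `d'_{m,k} = binom(m,k)·(m−1)!·(m+k−1)!/(2m+k)!`. -/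
def dCoeff' (m k : ℕ) : ℂ :=
  (m.choose k : ℂ) * ((m - 1).factorial : ℂ) * ((m + k - 1).factorial : ℂ) /
    ((2 * m + k).factorial : ℂ)

/-- `v_T = ε_3 − ε_1`. -/
def vT3 : Fin 3 → ℂ := ![-1, 0, 1]

/-- `v_S = ε_2 − ε_1`. -/
def vS3 : Fin 3 → ℂ := ![-1, 1, 0]

/-- The solution `φ₁(z₁,z₂,z₃) = (z₂−z₃)^{−2m} Σ_{k=0}^m (−1)^{m+k} d'_{m,k}
((−m−k)v_T + k v_S)(z₁−z₂)^{−m−k}(z₁−z₃)^k` (coordinates indexed by `0,1,2`). -/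
def phi1 (m : ℕ) (z : Fin 3 → ℂ) : Fin 3 → ℂ :=
  (z 1 - z 2) ^ (-(2 * m : ℤ)) •
    ∑ k ∈ Finset.range (m + 1),
      ((-1 : ℂ) ^ (m + k) * dCoeff' m k * (z 0 - z 1) ^ (-(m : ℤ) - k) *
          (z 0 - z 2) ^ (k : ℤ)) •
        ((-(m : ℂ) - k) • vT3 + (k : ℂ) • vS3)

theorem Finset.sum_range_mul_add_mul_succ_eq_zero {R : Type*} [CommRing R] (a b x : ℕ → R)
    (n : ℕ) (hab : ∀ k < n, a (k + 1) + b k = 0) (ha₀ : a 0 = 0) (haₙ : a n = 0) :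
    ∑ k ∈ range n, (a k * x k + b k * x (k + 1)) = 0 := by
  have hterm : ∀ k ∈ range n,
      a k * x k + b k * x (k + 1) = a k * x k - a (k + 1) * x (k + 1) :=
    fun k hk => by linear_combination x (k + 1) * hab k (mem_range.1 hk)
  rw [sum_congr rfl hterm, sum_range_sub' (fun k => a k * x k), ha₀, haₙ]
  ring

theorem hasFDerivAt_sub_zpow {ι : Type*} [Fintype ι] (a b : ι) (p : ℤ) {z : ι → ℂ}
    (h : z a ≠ z b) :
    HasFDerivAt (fun x : ι → ℂ => (x a - x b) ^ p)
      ((p * (z a - z b) ^ (p - 1)) •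
        ((ContinuousLinearMap.proj a : (ι → ℂ) →L[ℂ] ℂ) - ContinuousLinearMap.proj b)) z :=
  (hasDerivAt_zpow p _ (Or.inl (sub_ne_zero.2 h))).comp_hasFDerivAt
    (f := fun x : ι → ℂ => x a - x b) z
    ((ContinuousLinearMap.proj (R := ℂ) (φ := fun _ : ι => ℂ) a).hasFDerivAt.sub
      (ContinuousLinearMap.proj (R := ℂ) (φ := fun _ : ι => ℂ) b).hasFDerivAt)

theorem dCoeff'_succ_mul {m k : ℕ} (hk : k < m) :
    dCoeff' m (k + 1) * ((k + 1) * (2 * m + k + 1)) = dCoeff' m k * ((m + k) * (m - k)) := by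
  have hchoose : (m.choose (k + 1) : ℂ) * (k + 1) = m.choose k * (m - k) := by
    have := congrArg (Nat.cast : ℕ → ℂ) (Nat.choose_succ_right_eq m k)
    push_cast [Nat.cast_sub hk.le] at this
    exact this
  have hfac : ((m + (k + 1) - 1).factorial : ℂ) = (m + k) * (m + k - 1).factorial := by
    rw [show m + (k + 1) - 1 = (m + k - 1) + 1 by omega, Nat.factorial_succ,
      show m + k - 1 + 1 = m + k by omega]
    push_cast; ring
  have hfac' : ((2 * m + (k + 1)).factorial : ℂ) = (2 * m + k + 1) * (2 * m + k).factorial := by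
    rw [← add_assoc, Nat.factorial_succ]; push_cast; ring
  have hne : ((2 * m + k).factorial : ℂ) ≠ 0 := Nat.cast_ne_zero.2 (Nat.factorial_ne_zero _)
  have hne' : ((2 * m + k + 1) * (2 * m + k).factorial : ℂ) ≠ 0 :=
    mul_ne_zero (by exact_mod_cast (2 * m + k).succ_ne_zero) hne
  rw [dCoeff', dCoeff', hfac, hfac', div_mul_eq_mul_div, div_mul_eq_mul_div,
    div_eq_div_iff hne' hne]
  linear_combination ((m - 1).factorial : ℂ) * (m + k - 1).factorial * (m + k) *
    (2 * m + k + 1) * (2 * m + k).factorial * hchoose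

namespace Phi1

def coeff (m k : ℕ) : ℂ := (-1) ^ (m + k) * dCoeff' m k

theorem coeff_eq_zero_of_lt {m k : ℕ} (h : m < k) : coeff m k = 0 := by
  simp [coeff, dCoeff', Nat.choose_eq_zero_of_lt h]

theorem coeff_succ_mul (m k : ℕ) :
    coeff m (k + 1) * ((k + 1) * (2 * m + k + 1)) = coeff m k * ((m + k) * (k - m)) := by
  rcases lt_or_ge k m with hk | hk
  · have hsign : (-1 : ℂ) ^ (m + (k + 1)) = -(-1) ^ (m + k) := by
      rw [← add_assoc, pow_succ]; ring
    rw [coeff, coeff, hsign]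
    linear_combination -(-1 : ℂ) ^ (m + k) * dCoeff'_succ_mul hk
  · rw [coeff_eq_zero_of_lt (Nat.lt_succ_of_le hk)]
    rcases hk.lt_or_eq with hk | rfl
    · rw [coeff_eq_zero_of_lt hk]; ring
    · ring

def term (m k : ℕ) (z : Fin 3 → ℂ) : ℂ :=
  (z 1 - z 2) ^ (-(2 * m : ℤ)) * (z 0 - z 1) ^ (-(m : ℤ) - k) * (z 0 - z 2) ^ (k : ℤ)

variable {m : ℕ} {z : Fin 3 → ℂ}

theorem term_succ_mul (k : ℕ) (h : z 0 ≠ z 1) :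
    term m (k + 1) z * (z 0 - z 1) = term m k z * (z 0 - z 2) := by
  have hu : z 0 - z 1 ≠ 0 := sub_ne_zero.2 h
  rw [term, term, zpow_natCast, zpow_natCast, pow_succ, Nat.cast_succ, ← sub_sub,
    zpow_sub_one₀ hu]
  field_simp

open ContinuousLinearMap in
theorem hasFDerivAt_term (k : ℕ) (hz : z ∈ Cconf 3) :
    HasFDerivAt (term m k) (term m k z •
      ((-(2 * m : ℂ) / (z 1 - z 2)) • ((proj 1 : (Fin 3 → ℂ) →L[ℂ] ℂ) - proj 2) +
        ((-m - k : ℂ) / (z 0 - z 1)) • ((proj 0 : (Fin 3 → ℂ) →L[ℂ] ℂ) - proj 1) +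
        ((k : ℂ) / (z 0 - z 2)) • ((proj 0 : (Fin 3 → ℂ) →L[ℂ] ℂ) - proj 2))) z := by
  have h01 := hz 0 1 (by decide)
  have h02 := hz 0 2 (by decide)
  have h12 := hz 1 2 (by decide)
  refine (((hasFDerivAt_sub_zpow 1 2 (-(2 * m : ℤ)) h12).fun_mul
    (hasFDerivAt_sub_zpow 0 1 (-(m : ℤ) - k) h01)).fun_mul
    (hasFDerivAt_sub_zpow 0 2 k h02)).congr_fderiv ?_
  ext y
  simp only [term, add_apply, smul_apply, sub_apply, proj_apply, smul_eq_mul,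
    zpow_sub_one₀ (sub_ne_zero.2 h01), zpow_sub_one₀ (sub_ne_zero.2 h02),
    zpow_sub_one₀ (sub_ne_zero.2 h12)]
  push_cast
  ring

def moment (m j : ℕ) (z : Fin 3 → ℂ) : ℂ :=
  ∑ k ∈ Finset.range (m + 1), coeff m k * k ^ j * term m k z

theorem phi1_eq_moment (m : ℕ) :
    phi1 m = fun z => moment m 0 z • ![(m : ℂ), 0, -m] + moment m 1 z • ![0, 1, -1] := by
  have hvec (k : ℕ) :
      (-(m : ℂ) - k) • vT3 + (k : ℂ) • vS3 = ![(m : ℂ), 0, -m] + (k : ℂ) • ![0, 1, -1] := by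
    funext l
    fin_cases l <;> simp [vT3, vS3]
    ring
  funext z
  simp only [phi1, hvec, moment, smul_add, Finset.sum_add_distrib, Finset.smul_sum, smul_smul,
    Finset.sum_smul]
  congr 1 <;> refine Finset.sum_congr rfl fun k _ => ?_ <;> congr 1 <;> rw [coeff, term] <;> ring

theorem moment_relation (h : z 0 ≠ z 1) :
    (z 0 - z 2) * (m ^ 2 * moment m 0 z - moment m 2 z) +
      (z 0 - z 1) * (moment m 2 z + 2 * m * moment m 1 z) = 0 := by
  have htel := Finset.sum_range_mul_add_mul_succ_eq_zero
    (fun k => coeff m k * (k * (k + 2 * m))) (fun k => coeff m k * (m ^ 2 - k ^ 2))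
    (fun k => term m k z) (m + 1) (fun k _ => by push_cast; linear_combination coeff_succ_mul m k)
    (by simp) (by simp [coeff_eq_zero_of_lt (Nat.lt_succ_self m)])
  rw [← mul_zero (z 0 - z 1), ← htel]
  simp only [moment, Finset.mul_sum, ← Finset.sum_sub_distrib, ← Finset.sum_add_distrib]
  refine Finset.sum_congr rfl fun k _ => ?_
  linear_combination -(coeff m k * (m ^ 2 - k ^ 2)) * term_succ_mul k h

theorem moment_two_eq (hz : z ∈ Cconf 3) :
    moment m 2 z =
      m * (m * (z 0 - z 2) * moment m 0 z + 2 * (z 0 - z 1) * moment m 1 z) / (z 1 - z 2) := by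
  have hw : z 1 - z 2 ≠ 0 := sub_ne_zero.2 (hz 1 2 (by decide))
  rw [eq_div_iff hw]
  linear_combination -moment_relation (hz 0 1 (by decide))

theorem hasFDerivAt_moment (j : ℕ) (hz : z ∈ Cconf 3) :
    HasFDerivAt (moment m j)
      (∑ k ∈ Finset.range (m + 1), (coeff m k * k ^ j) • fderiv ℂ (term m k) z) z :=
  HasFDerivAt.fun_sum fun k _ =>
    (hasFDerivAt_term k hz).differentiableAt.hasFDerivAt.const_smul (coeff m k * k ^ j)

theorem fderiv_moment_apply (j : ℕ) (hz : z ∈ Cconf 3) (y : Fin 3 → ℂ) :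
    fderiv ℂ (moment m j) z y =
      (-(2 * m) * (y 1 - y 2) / (z 1 - z 2) - m * (y 0 - y 1) / (z 0 - z 1)) * moment m j z +
        ((y 0 - y 2) / (z 0 - z 2) - (y 0 - y 1) / (z 0 - z 1)) * moment m (j + 1) z := by
  simp only [(hasFDerivAt_moment j hz).fderiv, sum_apply,
    smul_apply, (hasFDerivAt_term _ hz).fderiv, moment, Finset.mul_sum,
    ← Finset.sum_add_distrib]
  refine Finset.sum_congr rfl fun k _ => ?_
  simp only [add_apply, smul_apply, sub_apply, ContinuousLinearMap.proj_apply, smul_eq_mul]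
  ring

theorem hasFDerivAt_phi1 (hz : z ∈ Cconf 3) :
    HasFDerivAt (phi1 m)
      ((fderiv ℂ (moment m 0) z).smulRight ![(m : ℂ), 0, -m] +
        (fderiv ℂ (moment m 1) z).smulRight ![0, 1, -1]) z := by
  rw [phi1_eq_moment]
  exact ((hasFDerivAt_moment 0 hz).differentiableAt.hasFDerivAt.smul_const _).add
    ((hasFDerivAt_moment 1 hz).differentiableAt.hasFDerivAt.smul_const _)

theorem kz_equation (hz : z ∈ Cconf 3) (i : Fin 3) :
    fderiv ℂ (phi1 m) z (Pi.single i 1) =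
      -(m : ℂ) • ∑ j ∈ Finset.univ.filter (fun j => j ≠ i),
        (z i - z j)⁻¹ • (phi1 m z ∘ ⇑(Equiv.swap i j)⁻¹ + phi1 m z) := by
  have h01 := sub_ne_zero.2 (hz 0 1 (by decide))
  have h02 := sub_ne_zero.2 (hz 0 2 (by decide))
  have h12 := sub_ne_zero.2 (hz 1 2 (by decide))
  have h10 := sub_ne_zero.2 (hz 1 0 (by decide))
  have h20 := sub_ne_zero.2 (hz 2 0 (by decide))
  have h21 := sub_ne_zero.2 (hz 2 1 (by decide))
  -- the summand `j = i` is `0⁻¹ • _ = 0`, so the filter can be dropped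
  rw [Finset.sum_filter_of_ne fun j _ hj => by rintro rfl; simp at hj, Fin.sum_univ_three,
    (hasFDerivAt_phi1 hz).fderiv, add_apply,
    ContinuousLinearMap.smulRight_apply, ContinuousLinearMap.smulRight_apply,
    fderiv_moment_apply 0 hz, fderiv_moment_apply 1 hz, moment_two_eq hz, phi1_eq_moment]
  funext l
  fin_cases i <;> fin_cases l <;>
    simp only [Fin.zero_eta, Fin.mk_one, Fin.reduceFinMk, Pi.add_apply, Pi.smul_apply,
      Function.comp_apply, Equiv.swap_inv, Pi.single_apply, Equiv.swap_apply_def, Fin.isValue,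
      Fin.reduceEq, if_true, if_false, Matrix.cons_val, smul_eq_mul, sub_self, inv_zero] <;>
    field_simp <;> ring

end Phi1

theorem stmt_12_general (m : ℕ) :
    (∀ z : Fin 3 → ℂ, phi1 m z 0 + phi1 m z 1 + phi1 m z 2 = 0) ∧
    IsKZSol (fun (g : Equiv.Perm (Fin 3)) (x : Fin 3 → ℂ) => x ∘ ⇑g⁻¹)
      (-(m : ℂ)) (Cconf 3) (phi1 m) := by
  refine ⟨fun z => ?_,
    fun z hz => (Phi1.hasFDerivAt_phi1 hz).differentiableAt.differentiableWithinAt,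
    fun z hz i => Phi1.kz_equation hz i⟩
  simp only [Phi1.phi1_eq_moment, Pi.add_apply, Pi.smul_apply, smul_eq_mul, Matrix.cons_val]
  ring

/-- for a positive integer `m`, `φ₁` takes values in the
reflection representation `W = {x ∈ ℂ³ : x₁+x₂+x₃ = 0}` (with `S₃` permuting
coordinates) and is a solution of the KZ equation with parameter `−m` on `C₃`. -/
theorem stmt_12 (m : ℕ) (hm : 0 < m) :
    (∀ z : Fin 3 → ℂ, phi1 m z 0 + phi1 m z 1 + phi1 m z 2 = 0) ∧
    IsKZSol (fun (g : Equiv.Perm (Fin 3)) (x : Fin 3 → ℂ) => x ∘ ⇑g⁻¹)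
      (-(m : ℂ)) (Cconf 3) (phi1 m) :=
  stmt_12_general m
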